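/- arXiv:1506.06146 — 3 statements merged into one kernel-verified Lean document; each statement's English description precedes it below -/
import Mathlib

section
/- Let A be a commutative ring and let 𝔐 be an A[[u]]-module. Then 𝔐 is a finitely generated projective A[[u]]-module if and only if 𝔐 is u-torsion free, u-adically complete and separated, and 𝔐/u𝔐 is a finitely generated projective A-module. Moreover, if these conditions hold, there is an isomorphism of A[[u]]-modules (𝔐/u𝔐) ⊗_A A[[u]] ≅ 𝔐 reducing to the identity modulo u. -/
/-!
Write `R = A[[u]]`. A finitely generated projective `R`-module is a retract of `Rⁿ`, so it is
`u`-torsion free and `u`-adically complete because `R` is, and its reduction mod `u` is an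
`A`-linear retract of `(R ⊗_A Aⁿ)/u ≅ Aⁿ`.

Conversely, put `N = 𝔐/u𝔐`. Since `R ⊗_A N` is projective, the map `R ⊗_A N → N` lifts along
`𝔐 → N` to some `f : R ⊗_A N → 𝔐` which is the identity mod `u`. Completeness of `R ⊗_A N` and
separatedness of `𝔐` make `f` surjective by successive approximation. As
`ker (R ⊗_A N → N) = u (R ⊗_A N)` and `𝔐` is `u`-torsion free, every element of `ker f` is `u`
times an element of `ker f`, so `ker f ⊆ ⋂ uⁿ (R ⊗_A N) = 0`.
-/

open scoped TensorProduct

/-- The submodule `u·𝔐` of a module `𝔐` over the power series ring `A[[u]]`. -/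
noncomputable def uSub (A : Type*) [CommRing A] (M : Type*) [AddCommGroup M]
    [Module (PowerSeries A) M] : Submodule (PowerSeries A) M :=
  Ideal.span {(PowerSeries.X : PowerSeries A)} • (⊤ : Submodule (PowerSeries A) M)

section Adic

variable {R : Type*} [CommRing R] (I : Ideal R) {M N : Type*} [AddCommGroup M] [Module R M]
  [AddCommGroup N] [Module R N]

theorem Submodule.mem_span_singleton_smul_top {x : R} {m : M} :
    m ∈ (Ideal.span {x} • ⊤ : Submodule R M) ↔ ∃ y, x • y = m := by
  simp only [Submodule.ideal_span_singleton_smul, Submodule.mem_smul_pointwise_iff_exists,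
    Submodule.mem_top, true_and]

theorem Submodule.mem_span_singleton_pow_smul_top {x : R} {n : ℕ} {m : M} :
    m ∈ (Ideal.span {x} ^ n • ⊤ : Submodule R M) ↔ ∃ y, x ^ n • y = m := by
  rw [Ideal.span_singleton_pow, Submodule.mem_span_singleton_smul_top]

theorem IsAdicComplete.of_retract [IsAdicComplete I N] (i : M →ₗ[R] N) (r : N →ₗ[R] M)
    (h : r ∘ₗ i = .id) : IsAdicComplete I M := by
  rw [← AdicCompletion.of_bijective_iff]
  have hri : Function.LeftInverse r i := LinearMap.congr_fun h
  have hmap : Function.LeftInverse (AdicCompletion.map I r) (AdicCompletion.map I i) := fun x => by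
    rw [AdicCompletion.map_comp_apply, h, AdicCompletion.map_id, LinearMap.id_apply]
  obtain ⟨hinj, hsurj⟩ := AdicCompletion.of_bijective I N
  constructor
  · refine Function.Injective.of_comp (f := AdicCompletion.map I i) ?_
    have : AdicCompletion.map I i ∘ AdicCompletion.of I M = AdicCompletion.of I N ∘ i :=
      funext (AdicCompletion.map_of I i)
    rw [this]
    exact hinj.comp hri.injective
  · refine Function.Surjective.of_comp (g := r) ?_
    have : AdicCompletion.of I M ∘ r = AdicCompletion.map I r ∘ AdicCompletion.of I N :=
      funext fun x => (AdicCompletion.map_of I r x).symm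
    rw [this]
    exact hmap.surjective.comp hsurj

instance IsAdicComplete.pi {ι : Type*} [Finite ι] (M : ι → Type*) [∀ j, AddCommGroup (M j)]
    [∀ j, Module R (M j)] [∀ j, IsAdicComplete I (M j)] : IsAdicComplete I (∀ j, M j) := by
  classical
  have := Fintype.ofFinite ι
  rw [← AdicCompletion.of_bijective_iff]
  have h : ⇑(AdicCompletion.piEquivOfFintype I M) ∘ AdicCompletion.of I (∀ j, M j) =
      Pi.map fun j => AdicCompletion.of I (M j) := by
    funext x j
    simp only [Function.comp_apply, AdicCompletion.piEquivOfFintype_apply, AdicCompletion.pi,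
      LinearMap.pi_apply, AdicCompletion.map_of, Pi.map_apply, LinearMap.proj_apply]
  refine (Function.Bijective.of_comp_iff' (AdicCompletion.piEquivOfFintype I M).bijective _).mp ?_
  rw [h]
  exact Function.Bijective.piMap fun j => AdicCompletion.of_bijective I (M j)

theorem IsAdicComplete.of_projective [IsAdicComplete I R] [Module.Finite R M]
    [Module.Projective R M] : IsAdicComplete I M :=
  have ⟨_, f, g, _, _, hfg⟩ := Module.Finite.exists_comp_eq_id_of_projective R M
  .of_retract I g f hfg

theorem LinearMap.injective_of_ker_le_span_singleton_smul_top {x : R}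
    [IsHausdorff (Ideal.span {x}) M] (hN : IsSMulRegular N x) (f : M →ₗ[R] N)
    (hf : ker f ≤ Ideal.span {x} • ⊤) : Function.Injective f := by
  have hdiv (p) (hp : p ∈ ker f) : ∃ y ∈ ker f, x • y = p := by
    obtain ⟨y, rfl⟩ := Submodule.mem_span_singleton_smul_top.mp (hf hp)
    exact ⟨y, hN.right_eq_zero_of_smul (by simpa using hp), rfl⟩
  have hpow (n : ℕ) : ∀ p ∈ ker f, ∃ y, x ^ n • y = p := by
    induction n with
    | zero => exact fun p _ => ⟨p, by rw [pow_zero, one_smul]⟩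
    | succ n ih =>
      intro p hp
      obtain ⟨y, hy, rfl⟩ := hdiv p hp
      obtain ⟨z, rfl⟩ := ih y hy
      exact ⟨z, by rw [pow_succ', mul_smul]⟩
  refine (injective_iff_map_eq_zero f).mpr fun p hp => IsHausdorff.haus' (I := Ideal.span {x}) p
    fun n => SModEq.zero.mpr (Submodule.mem_span_singleton_pow_smul_top.mpr (hpow n p hp))

end Adic

open PowerSeries

section PowerSeries

variable {A : Type*} [CommRing A]

theorem PowerSeries.isRegular_X : IsRegular (X : A⟦X⟧) := ⟨X_mul_injective, mul_X_injective⟩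

section BaseChange

variable (A) (V : Type*) [AddCommGroup V] [Module A V]

noncomputable def constantCoeffTensor : A⟦X⟧ ⊗[A] V →ₗ[A] V :=
  TensorProduct.lid A V ∘ₗ (coeff 0).rTensor V

variable {A V}

@[simp]
theorem constantCoeffTensor_tmul (r : A⟦X⟧) (v : V) :
    constantCoeffTensor A V (r ⊗ₜ v) = constantCoeff r • v := by
  simp [constantCoeffTensor]

theorem constantCoeffTensor_smul (c : A⟦X⟧) (p : A⟦X⟧ ⊗[A] V) :
    constantCoeffTensor A V (c • p) = constantCoeff c • constantCoeffTensor A V p := by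
  induction p with
  | zero => simp
  | tmul r v => simp [TensorProduct.smul_tmul', mul_smul]
  | add p q hp hq => simp only [smul_add, map_add, hp, hq]

theorem sub_one_tmul_constantCoeffTensor_mem_uSub (p : A⟦X⟧ ⊗[A] V) :
    p - 1 ⊗ₜ constantCoeffTensor A V p ∈ uSub A (A⟦X⟧ ⊗[A] V) := by
  induction p with
  | zero => simp
  | tmul r v =>
    obtain ⟨h, hh⟩ := X_dvd_iff.mpr (show constantCoeff (r - C (constantCoeff r)) = 0 by simp)
    refine Submodule.mem_span_singleton_smul_top.mpr ⟨h ⊗ₜ v, ?_⟩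
    rw [constantCoeffTensor_tmul, ← TensorProduct.smul_tmul, ← Algebra.algebraMap_eq_smul_one,
      algebraMap_eq, ← TensorProduct.sub_tmul, hh]
    rfl
  | add p q hp hq =>
    rw [map_add, TensorProduct.tmul_add, add_sub_add_comm]
    exact add_mem hp hq

theorem ker_constantCoeffTensor :
    LinearMap.ker (constantCoeffTensor A V) = (uSub A (A⟦X⟧ ⊗[A] V)).restrictScalars A := by
  ext p
  refine ⟨fun hp => ?_, fun hp => ?_⟩
  · simpa [LinearMap.mem_ker.mp hp] using sub_one_tmul_constantCoeffTensor_mem_uSub p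
  · obtain ⟨y, rfl⟩ := Submodule.mem_span_singleton_smul_top.mp hp
    simp [constantCoeffTensor_smul]

variable (A V) in
noncomputable def quotientUSubBaseChangeEquiv :
    ((A⟦X⟧ ⊗[A] V) ⧸ uSub A (A⟦X⟧ ⊗[A] V)) ≃ₗ[A] V :=
  (Submodule.Quotient.restrictScalarsEquiv A (uSub A (A⟦X⟧ ⊗[A] V))).symm ≪≫ₗ
    Submodule.quotEquivOfEq _ (LinearMap.ker (constantCoeffTensor A V))
      ker_constantCoeffTensor.symm ≪≫ₗ
    (constantCoeffTensor A V).quotKerEquivOfSurjective fun v => ⟨1 ⊗ₜ v, by simp⟩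

end BaseChange

variable {M Q : Type*} [AddCommGroup M] [Module A⟦X⟧ M] [AddCommGroup Q] [Module A⟦X⟧ Q]

theorem uSub_le_comap_uSub (f : M →ₗ[A⟦X⟧] Q) : uSub A M ≤ (uSub A Q).comap f :=
  Submodule.smul_top_le_comap_smul_top _ f

variable [Module A M] [IsScalarTower A A⟦X⟧ M] [Module A Q] [IsScalarTower A A⟦X⟧ Q]

theorem constantCoeff_smul_mk_uSub (c : A⟦X⟧) (n : M ⧸ uSub A M) :
    constantCoeff c • n = c • n := by
  obtain ⟨m, rfl⟩ := Submodule.Quotient.mk_surjective _ n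
  obtain ⟨h, hh⟩ := X_dvd_iff.mpr (show constantCoeff (c - C (constantCoeff c)) = 0 by simp)
  have hX : (X : A⟦X⟧) • (Submodule.Quotient.mk m : M ⧸ uSub A M) = 0 := by
    rw [← Submodule.Quotient.mk_smul, Submodule.Quotient.mk_eq_zero]
    exact Submodule.mem_span_singleton_smul_top.mpr ⟨m, rfl⟩
  rw [← algebraMap_smul A⟦X⟧, algebraMap_eq, ← sub_eq_zero, ← sub_smul, ← neg_sub, hh, neg_smul,
    mul_comm, mul_smul, hX, smul_zero, neg_zero]

theorem finite_projective_quotient_uSub_of_retract [Module.Finite A (Q ⧸ uSub A Q)]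
    [Module.Projective A (Q ⧸ uSub A Q)] (i : M →ₗ[A⟦X⟧] Q) (r : Q →ₗ[A⟦X⟧] M)
    (h : r ∘ₗ i = .id) :
    Module.Finite A (M ⧸ uSub A M) ∧ Module.Projective A (M ⧸ uSub A M) := by
  let i' : (M ⧸ uSub A M) →ₗ[A] Q ⧸ uSub A Q :=
    ((uSub A M).mapQ (uSub A Q) i (uSub_le_comap_uSub i)).restrictScalars A
  let r' : (Q ⧸ uSub A Q) →ₗ[A] M ⧸ uSub A M :=
    ((uSub A Q).mapQ (uSub A M) r (uSub_le_comap_uSub r)).restrictScalars A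
  have h' : r' ∘ₗ i' = .id := by
    refine LinearMap.ext fun m => ?_
    obtain ⟨m, rfl⟩ := Submodule.Quotient.mk_surjective _ m
    simp only [i', r', LinearMap.comp_apply, LinearMap.restrictScalars_apply]
    rw [Submodule.mapQ_apply, Submodule.mapQ_apply, ← LinearMap.comp_apply r i, h]
    rfl
  exact ⟨.of_surjective r' (Function.LeftInverse.surjective (LinearMap.congr_fun h')),
    .of_split i' r' h'⟩

theorem finite_projective_quotient_uSub [Module.Finite A⟦X⟧ M] [Module.Projective A⟦X⟧ M] :
    Module.Finite A (M ⧸ uSub A M) ∧ Module.Projective A (M ⧸ uSub A M) := by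
  obtain ⟨n, f, g, -, -, hfg⟩ := Module.Finite.exists_comp_eq_id_of_projective A⟦X⟧ M
  let e := TensorProduct.piScalarRight A A⟦X⟧ A⟦X⟧ (Fin n)
  have := Module.Finite.equiv (quotientUSubBaseChangeEquiv A (Fin n → A)).symm
  have := Module.Projective.of_equiv' (quotientUSubBaseChangeEquiv A (Fin n → A)).symm
  refine finite_projective_quotient_uSub_of_retract (e.symm.toLinearMap ∘ₗ g) (f ∘ₗ e.toLinearMap) ?_
  ext m
  simpa using LinearMap.congr_fun hfg m

theorem exists_baseChange_quotient_uSub_equiv (hM : IsSMulRegular M (X : A⟦X⟧))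
    [IsAdicComplete (Ideal.span {(X : A⟦X⟧)}) M] [Module.Finite A (M ⧸ uSub A M)]
    [Module.Projective A (M ⧸ uSub A M)] :
    ∃ e : A⟦X⟧ ⊗[A] (M ⧸ uSub A M) ≃ₗ[A⟦X⟧] M,
      ∀ n, Submodule.Quotient.mk (e (1 ⊗ₜ n)) = n := by
  let g : A⟦X⟧ ⊗[A] (M ⧸ uSub A M) →ₗ[A⟦X⟧] M ⧸ uSub A M := LinearMap.id.liftBaseChange A⟦X⟧
  have hg (n) : g (1 ⊗ₜ n) = n := by simp [g]
  obtain ⟨f, hf⟩ := Module.projective_lifting_property (uSub A M).mkQ g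
    (Submodule.mkQ_surjective _)
  have hfg (p) : Submodule.Quotient.mk (f p) = g p := LinearMap.congr_fun hf p
  have hg_eq (p) : g p = constantCoeffTensor A (M ⧸ uSub A M) p := by
    induction p with
    | zero => simp
    | tmul r n => simp [g, constantCoeff_smul_mk_uSub]
    | add p q hp hq => rw [map_add, map_add, hp, hq]
  have := IsAdicComplete.of_projective (Ideal.span {(X : A⟦X⟧)}) (M := A⟦X⟧ ⊗[A] (M ⧸ uSub A M))
  have hinj : Function.Injective f := by
    refine LinearMap.injective_of_ker_le_span_singleton_smul_top hM f fun p hp => ?_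
    have : p ∈ LinearMap.ker (constantCoeffTensor A (M ⧸ uSub A M)) := by
      rw [LinearMap.mem_ker, ← hg_eq, ← hfg, LinearMap.mem_ker.mp hp, Submodule.Quotient.mk_zero]
    rwa [ker_constantCoeffTensor] at this
  have hsurj : Function.Surjective f :=
    surjective_of_mkQ_comp_surjective (I := Ideal.span {(X : A⟦X⟧)})
      (hf ▸ fun n => ⟨1 ⊗ₜ n, hg n⟩)
  exact ⟨.ofBijective f ⟨hinj, hsurj⟩, fun n => (hfg _).trans (hg n)⟩

end PowerSeries

/-- An `A[[u]]`-module `𝔐` is finitely generated projective iff it is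
`u`-torsion free, `u`-adically complete and separated, and `𝔐/u𝔐` is a finitely generated
projective `A`-module; moreover, in that case there is an `A[[u]]`-linear isomorphism
`A[[u]] ⊗_A (𝔐/u𝔐) ≅ 𝔐` reducing to the identity modulo `u`. -/
theorem stmt2 {A : Type*} [CommRing A] {M : Type*} [AddCommGroup M]
    [Module A M] [Module (PowerSeries A) M] [IsScalarTower A (PowerSeries A) M] :
    ((Module.Finite (PowerSeries A) M ∧ Module.Projective (PowerSeries A) M) ↔
      ((∀ m : M, (PowerSeries.X : PowerSeries A) • m = 0 → m = 0) ∧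
        IsAdicComplete (Ideal.span {(PowerSeries.X : PowerSeries A)}) M ∧
        Module.Finite A (M ⧸ uSub A M) ∧ Module.Projective A (M ⧸ uSub A M))) ∧
    (Module.Finite (PowerSeries A) M → Module.Projective (PowerSeries A) M →
      ∃ e : (TensorProduct A (PowerSeries A) (M ⧸ uSub A M)) ≃ₗ[PowerSeries A] M,
        ∀ m : M,
          (Submodule.Quotient.mk (e ((1 : PowerSeries A) ⊗ₜ[A] Submodule.Quotient.mk m))
              : M ⧸ uSub A M) =
            Submodule.Quotient.mk m) := by
  have forward (_ : Module.Finite A⟦X⟧ M) (_ : Module.Projective A⟦X⟧ M) :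
      IsSMulRegular M (X : A⟦X⟧) ∧ IsAdicComplete (Ideal.span {(X : A⟦X⟧)}) M ∧
        Module.Finite A (M ⧸ uSub A M) ∧ Module.Projective A (M ⧸ uSub A M) :=
    ⟨Module.Flat.isSMulRegular_of_isRegular isRegular_X, .of_projective _,
      finite_projective_quotient_uSub⟩
  refine ⟨⟨fun ⟨hfin, hproj⟩ => ?_, fun ⟨htf, _, _, _⟩ => ?_⟩, fun hfin hproj => ?_⟩
  · obtain ⟨htf, hrest⟩ := forward hfin hproj
    exact ⟨isSMulRegular_iff_right_eq_zero_of_smul.mp htf, hrest⟩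
  · obtain ⟨e, -⟩ := exists_baseChange_quotient_uSub_equiv
      (isSMulRegular_iff_right_eq_zero_of_smul.mpr htf)
    exact ⟨.equiv e, .of_equiv' e⟩
  · obtain ⟨htf, _, _, _⟩ := forward hfin hproj
    obtain ⟨e, he⟩ := exists_baseChange_quotient_uSub_equiv htf
    exact ⟨e, fun m => he _⟩
end

section
/- Let A be a Noetherian local domain and f a nonzero non-unit element of A which is contained in every nonzero prime ideal of A. Then A is one-dimensional. -/
/-!
Every nonzero prime contains `f`, so a prime `q` of height at most one that is nonzero is minimal
over `(f)`. By Krull's principal ideal theorem every non-unit `x` lies in such a prime (a minimal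
prime over `(x)`), hence a maximal ideal `m ∋ f` is covered by the finitely many minimal primes
over `(f)`. Prime avoidance makes `m` one of them, and Krull's theorem bounds its height by one.
Conversely `(f)` itself has height one, as `f` is a nonzero non-unit.
-/

namespace Ideal

variable {R : Type*} [CommRing R]

lemma mem_minimalPrimes_of_height_le_one [IsDomain R] {I q : Ideal R} [q.IsPrime]
    (hI : I ≠ ⊥) (hIq : I ≤ q) (hq : q.height ≤ 1) : q ∈ I.minimalPrimes := by
  obtain ⟨p, hp, hpq⟩ := exists_minimalPrimes_le hIq
  have := hp.isPrime
  obtain rfl | hlt := hpq.eq_or_lt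
  · exact hp
  have hp0 : p.height ≠ 0 := height_eq_zero_iff_eq_bot.not.mpr (ne_bot_of_le_ne_bot hI hp.1.2)
  have hle : p.height + 1 ≤ 1 := (height_add_one_le_of_lt_of_isPrime hlt).trans hq
  exact absurd ((add_le_add_left (Order.one_le_iff_ne_zero.mpr hp0) 1).trans hle) (by decide)

lemma exists_isPrime_mem_height_le_one [IsNoetherianRing R] {x : R} (hx : ¬IsUnit x) :
    ∃ q : Ideal R, q.IsPrime ∧ x ∈ q ∧ q.height ≤ 1 := by
  obtain ⟨q, hq⟩ := (span {x}).nonempty_minimalPrimes (by simpa)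
  exact ⟨q, hq.isPrime, hq.1.2 (mem_span_singleton_self x),
    height_le_one_of_isPrincipal_of_mem_minimalPrimes _ q hq⟩

section

variable [IsDomain R] [IsNoetherianRing R] {f : R}

lemma mem_minimalPrimes_span_singleton_of_forall_mem (hf0 : f ≠ 0)
    (hf : ∀ P : Ideal R, P.IsPrime → P ≠ ⊥ → f ∈ P) {m : Ideal R} [m.IsMaximal] (hfm : f ∈ m) :
    m ∈ (span {f}).minimalPrimes := by
  have hfm' : span {f} ≤ m := (span_singleton_le_iff_mem m).mpr hfm
  have hf_ne : span {f} ≠ ⊥ := by simpa using hf0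
  obtain ⟨p₀, hp₀, -⟩ := exists_minimalPrimes_le hfm'
  refine (subset_iUnion_iff_mem_of_isMaximal_of_finite
    (span {f}).finite_minimalPrimes_of_isNoetherianRing ⊥ ⊥
    (fun p hp _ _ ↦ hp.isPrime) bot_ne_top bot_ne_top).mp fun x hx ↦ ?_
  obtain rfl | hx0 := eq_or_ne x 0
  · exact Set.mem_biUnion hp₀ (zero_mem p₀)
  obtain ⟨q, hq, hxq, hq1⟩ := exists_isPrime_mem_height_le_one
    fun hu ↦ IsMaximal.ne_top ‹_› (eq_top_of_isUnit_mem m hx hu)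
  have hq0 : q ≠ ⊥ := fun h ↦ hx0 (by simpa [h] using hxq)
  have hfq : span {f} ≤ q := (span_singleton_le_iff_mem q).mpr (hf q hq hq0)
  exact Set.mem_biUnion (mem_minimalPrimes_of_height_le_one hf_ne hfq hq1) hxq

lemma ringKrullDim_le_one_of_forall_mem (hf0 : f ≠ 0)
    (hf : ∀ P : Ideal R, P.IsPrime → P ≠ ⊥ → f ∈ P) : ringKrullDim R ≤ 1 := by
  refine (ringKrullDim_le_iff_isMaximal_height_le _).mpr fun m hm ↦ ?_
  obtain rfl | hm0 := eq_or_ne m ⊥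
  · simp
  exact_mod_cast height_le_one_of_isPrincipal_of_mem_minimalPrimes _ m
    (mem_minimalPrimes_span_singleton_of_forall_mem hf0 hf (hf m hm.isPrime hm0))

end

end Ideal

theorem stmt16_general {A : Type*} [CommRing A] [IsDomain A] [IsNoetherianRing A]
    (f : A) (hf0 : f ≠ 0) (hfu : ¬ IsUnit f)
    (hf : ∀ P : Ideal A, P.IsPrime → P ≠ ⊥ → f ∈ P) :
    ringKrullDim A = 1 := by
  refine le_antisymm (Ideal.ringKrullDim_le_one_of_forall_mem hf0 hf) ?_
  have hheight : (Ideal.span {f}).height = 1 :=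
    Ideal.height_span_singleton_eq_one_of_mem_nonZeroDivisors (mem_nonZeroDivisors_of_ne_zero hf0)
      hfu
  have := Ideal.height_le_ringKrullDim_of_ne_top (I := Ideal.span {f}) (by simpa)
  rwa [hheight] at this

/-- A Noetherian local domain containing a nonzero non-unit `f` lying in
every nonzero prime ideal is one-dimensional. -/
theorem stmt16 {A : Type*} [CommRing A] [IsDomain A] [IsNoetherianRing A] [IsLocalRing A]
    (f : A) (hf0 : f ≠ 0) (hfu : ¬ IsUnit f)
    (hf : ∀ P : Ideal A, P.IsPrime → P ≠ ⊥ → f ∈ P) :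
    ringKrullDim A = 1 :=
  stmt16_general f hf0 hfu hf
end

section
/- Let A be a discrete valuation ring with fraction field K, and let A'_K be an Artinian local ring equipped with a surjection A'_K → K. Let A' be the preimage of A under this surjection. Then A' is a subring of A'_K, the induced map A' → A is a surjective ring homomorphism with nilpotent kernel, and Spec A' is the pushout of Spec A and Spec A'_K along Spec K (i.e. A' = A ×_K A'_K as rings). -/
/-!
Since `f : A → K` is injective, `π x = f a` determines `a`, which gives the map `A' → A`;
it is surjective because `π` is. Its kernel is the part of `ker π` lying in `A'`, and `ker π` is
the maximal ideal of the Artinian local ring `R`, which equals its Jacobson radical and is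
therefore nilpotent.
-/

open Function

namespace RingHom

variable {A K R : Type*} [CommRing A] [CommRing K] [CommRing R]

noncomputable def comapRangeToDomain (f : A →+* K) (hf : Injective f) (π : R →+* K) :
    f.range.comap π →+* A :=
  (RingEquiv.ofLeftInverse (leftInverse_invFun hf)).symm.toRingHom.comp
    (π.restrict _ _ fun _ hx ↦ hx)

variable {f : A →+* K} (hf : Injective f) {π : R →+* K}

theorem apply_comapRangeToDomain (x : f.range.comap π) :
    f (comapRangeToDomain f hf π x) = π x :=
  congrArg Subtype.val ((RingEquiv.ofLeftInverse (leftInverse_invFun hf)).apply_symm_apply _)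

theorem comapRangeToDomain_eq_iff (x : f.range.comap π) (a : A) :
    comapRangeToDomain f hf π x = a ↔ f a = π x := by
  rw [← hf.eq_iff, apply_comapRangeToDomain, eq_comm]

theorem comapRangeToDomain_surjective (hπ : Surjective π) :
    Surjective (comapRangeToDomain f hf π) := by
  intro a
  obtain ⟨r, hr⟩ := hπ (f a)
  exact ⟨⟨r, ⟨a, hr.symm⟩⟩, (comapRangeToDomain_eq_iff hf _ a).2 hr.symm⟩

theorem ker_comapRangeToDomain :
    ker (comapRangeToDomain f hf π) = (ker π).comap (f.range.comap π).subtype := by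
  ext x
  simp only [mem_ker, Ideal.mem_comap, comapRangeToDomain_eq_iff hf, map_zero]
  exact eq_comm

theorem range_prodMk_comapRangeToDomain :
    Set.range (fun x : f.range.comap π ↦ (comapRangeToDomain f hf π x, (x : R))) =
      {y : A × R | f y.1 = π y.2} := by
  ext ⟨a, r⟩
  constructor
  · rintro ⟨x, hx⟩
    obtain ⟨rfl, rfl⟩ := Prod.mk.inj hx
    exact apply_comapRangeToDomain hf x
  · intro h
    exact ⟨⟨r, ⟨a, h⟩⟩, Prod.ext ((comapRangeToDomain_eq_iff hf _ a).2 h) rfl⟩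

end RingHom

theorem Ideal.isNilpotent_comap_of_injective {R S : Type*} [CommRing R] [CommRing S]
    {g : R →+* S} (hg : Injective g) {I : Ideal S} (hI : IsNilpotent I) :
    IsNilpotent (I.comap g) := by
  obtain ⟨n, hn⟩ := hI
  refine ⟨n, le_bot_iff.1 ?_⟩
  calc I.comap g ^ n ≤ (I ^ n).comap g := Ideal.le_comap_pow g n
    _ = ⊥ := by
      rw [hn, Ideal.zero_eq_bot, ← RingHom.ker_eq_comap_bot]
      exact (RingHom.injective_iff_ker_eq_bot g).1 hg

theorem IsArtinianRing.isNilpotent_ker_of_surjective {R K : Type*} [CommRing R]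
    [IsArtinianRing R] [IsLocalRing R] [Field K] {π : R →+* K} (hπ : Surjective π) :
    IsNilpotent (RingHom.ker π) := by
  rw [IsLocalRing.eq_maximalIdeal (RingHom.ker_isMaximal_of_surjective π hπ),
    ← IsLocalRing.jacobson_eq_maximalIdeal ⊥ bot_ne_top]
  exact isNilpotent_jacobson_bot

theorem stmt18_general {A K R : Type*} [CommRing A]
    [Field K] [Algebra A K] [IsFractionRing A K]
    [CommRing R] [IsArtinianRing R] [IsLocalRing R]
    (π : R →+* K) (hπ : Function.Surjective π) :
    ∃ φ : ((algebraMap A K).range.comap π : Subring R) →+* A,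
      (∀ x : ((algebraMap A K).range.comap π : Subring R), algebraMap A K (φ x) = π x) ∧
      Function.Surjective φ ∧
      IsNilpotent (RingHom.ker φ) ∧
      Function.Injective
        (fun x : ((algebraMap A K).range.comap π : Subring R) => ((φ x, (x : R)) : A × R)) ∧
      Set.range
          (fun x : ((algebraMap A K).range.comap π : Subring R) => ((φ x, (x : R)) : A × R)) =
        {y : A × R | algebraMap A K y.1 = π y.2} := by
  have hf := IsFractionRing.injective A K
  refine ⟨RingHom.comapRangeToDomain _ hf π, RingHom.apply_comapRangeToDomain hf,
    RingHom.comapRangeToDomain_surjective hf hπ, ?_,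
    fun x y h ↦ Subtype.ext (congrArg Prod.snd h), RingHom.range_prodMk_comapRangeToDomain hf⟩
  rw [RingHom.ker_comapRangeToDomain]
  exact Ideal.isNilpotent_comap_of_injective Subtype.val_injective
    (IsArtinianRing.isNilpotent_ker_of_surjective hπ)

/-- Let `A` be a DVR with fraction field `K`, and `R` an Artinian local ring
with a surjection `π : R →+* K`.  Let `A'` be the preimage of `A` in `R` (a subring of `R`).
Then the induced map `A' → A` is a surjective ring homomorphism with nilpotent kernel, and
`A'` is the fibre product `A ×_K R`: the map `A' → A × R` is injective with image exactly
the pairs having equal image in `K`. -/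
theorem stmt18 {A K R : Type*} [CommRing A] [IsDomain A] [IsDiscreteValuationRing A]
    [Field K] [Algebra A K] [IsFractionRing A K]
    [CommRing R] [IsArtinianRing R] [IsLocalRing R]
    (π : R →+* K) (hπ : Function.Surjective π) :
    ∃ φ : ((algebraMap A K).range.comap π : Subring R) →+* A,
      (∀ x : ((algebraMap A K).range.comap π : Subring R), algebraMap A K (φ x) = π x) ∧
      Function.Surjective φ ∧
      IsNilpotent (RingHom.ker φ) ∧
      Function.Injective
        (fun x : ((algebraMap A K).range.comap π : Subring R) => ((φ x, (x : R)) : A × R)) ∧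
      Set.range
          (fun x : ((algebraMap A K).range.comap π : Subring R) => ((φ x, (x : R)) : A × R)) =
        {y : A × R | algebraMap A K y.1 = π y.2} :=
  stmt18_general π hπ
end
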